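/- arXiv:2205.14617 — 2 statements merged into one kernel-verified Lean document; each statement's English description precedes it below -/
import Mathlib

section
/- Let w = r g(θ) with g(θ) = a sin(μθ), μ ∈ ℤ, μ ≥ 0, and φ = Dλ ln r with λ = μ²−1. Define the tensor field a(r,θ) = (1/r)[(g + g'' + λg) e_θ⊗e_θ − λ g' e_θ⊗e_r] on ℝ²∖{0}. Then div a = (1/r²)[(g''' + (λ+1)g') e_θ − (g'' + (λ+1)g) e_r], and for any x₀ ∈ ℝ² and any ε > 0, the loop integral ∫_{∂B_ε} (a ν − (x − x₀)⟨div a, ν⟩) dl = 0. -/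
open Real MeasureTheory

noncomputable def pd1 (f : ℝ → ℝ → ℝ) : ℝ → ℝ → ℝ := fun x y => deriv (fun t => f t y) x

noncomputable def pd2 (f : ℝ → ℝ → ℝ) : ℝ → ℝ → ℝ := fun x y => deriv (fun t => f x t) y

/-- The polar angle of the point (x,y). -/
noncomputable def polarAngle (x y : ℝ) : ℝ := Complex.arg (x + y * Complex.I)

/-- The i-th component of a planar vector. -/
def comp (v : ℝ × ℝ) : Fin 2 → ℝ := fun i => if i = 0 then v.1 else v.2

/-- Radial unit vector. -/
noncomputable def eR (θ : ℝ) : ℝ × ℝ := (Real.cos θ, Real.sin θ)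

/-- Angular unit vector. -/
noncomputable def eTh (θ : ℝ) : ℝ × ℝ := (-Real.sin θ, Real.cos θ)

/-!
Since `g'' = -μ² g`, the coefficient `g + g'' + λ g` vanishes and the tensor reduces to
`-(λ / r) g'(θ) e_θ ⊗ e_r`. In Cartesian coordinates its `i`-th row is `f_i(x) x` with
`f_i = C (-y, x)_i Re (x + i y)^μ / r^(μ+3)` homogeneous of degree `-2`, so Euler's relation
gives `div (f_i x) = (2 + deg f_i) f_i = 0`; the claimed right-hand side vanishes as well, because
`g''' + μ² g' = g'' + μ² g = 0`. Without the divergence term the loop integrand is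
`C cos (μθ) e_θ`, whose integral over a period vanishes unless `μ = 1`, and then
`C = -λ a₀ μ = 0`.
-/

@[simp]
theorem comp_zero (v : ℝ × ℝ) : comp v 0 = v.1 := rfl

@[simp]
theorem comp_one (v : ℝ × ℝ) : comp v 1 = v.2 := rfl

/-- Euler's relation `x ∂ₓf + y ∂ᵧf = d f`, the infinitesimal form of homogeneity of
degree `d`. -/
def HasEulerDegreeAt (f : ℝ → ℝ → ℝ) (d x y : ℝ) : Prop :=
  ∃ f₁ f₂ : ℝ, HasDerivAt (fun t => f t y) f₁ x ∧ HasDerivAt (fun t => f x t) f₂ y ∧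
    x * f₁ + y * f₂ = d * f x y

namespace HasEulerDegreeAt

variable {f g : ℝ → ℝ → ℝ} {d e x y : ℝ}

theorem mul (hf : HasEulerDegreeAt f d x y) (hg : HasEulerDegreeAt g e x y) :
    HasEulerDegreeAt (fun a b => f a b * g a b) (d + e) x y := by
  obtain ⟨f₁, f₂, hf₁, hf₂, hf⟩ := hf
  obtain ⟨g₁, g₂, hg₁, hg₂, hg⟩ := hg
  exact ⟨_, _, hf₁.mul hg₁, hf₂.mul hg₂, by linear_combination g x y * hf + f x y * hg⟩

theorem const_mul (c : ℝ) (hf : HasEulerDegreeAt f d x y) :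
    HasEulerDegreeAt (fun a b => c * f a b) d x y := by
  obtain ⟨f₁, f₂, hf₁, hf₂, hf⟩ := hf
  exact ⟨_, _, hf₁.const_mul c, hf₂.const_mul c, by linear_combination c * hf⟩

theorem pow (hf : HasEulerDegreeAt f d x y) (k : ℕ) :
    HasEulerDegreeAt (fun a b => f a b ^ k) (k * d) x y := by
  induction k with
  | zero => exact ⟨0, 0, by simpa using hasDerivAt_const x (1 : ℝ),
      by simpa using hasDerivAt_const y (1 : ℝ), by simp⟩
  | succ k ih =>
    simp only [pow_succ]
    convert ih.mul hf using 1
    push_cast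
    ring

theorem inv (hf : HasEulerDegreeAt f d x y) (h : f x y ≠ 0) :
    HasEulerDegreeAt (fun a b => (f a b)⁻¹) (-d) x y := by
  obtain ⟨f₁, f₂, hf₁, hf₂, hf⟩ := hf
  refine ⟨_, _, hf₁.fun_inv h, hf₂.fun_inv h, ?_⟩
  field_simp
  linear_combination -hf

theorem pd1_mul_fst_add_pd2_mul_snd (hf : HasEulerDegreeAt f d x y) :
    pd1 (fun a b => f a b * a) x y + pd2 (fun a b => f a b * b) x y = (d + 2) * f x y := by
  obtain ⟨f₁, f₂, hf₁, hf₂, hf⟩ := hf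
  rw [pd1, pd2, (hf₁.fun_mul (hasDerivAt_id' x)).deriv, (hf₂.fun_mul (hasDerivAt_id' y)).deriv]
  linear_combination hf

end HasEulerDegreeAt

/-- `r ^ n * cos (n θ)` in Cartesian coordinates. -/
noncomputable def rePow (n : ℕ) (x y : ℝ) : ℝ := (((x : ℂ) + y * Complex.I) ^ n).re

theorem hasEulerDegreeAt_rePow (n : ℕ) (x y : ℝ) : HasEulerDegreeAt (rePow n) n x y := by
  set z : ℂ := x + y * Complex.I
  have hz₁ : HasDerivAt (fun w : ℂ => (w + y * Complex.I) ^ n) (n * z ^ (n - 1)) x := by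
    simpa using ((hasDerivAt_id (x : ℂ)).add_const (y * Complex.I)).fun_pow n
  have hz₂ : HasDerivAt (fun w : ℂ => (x + w * Complex.I) ^ n)
      (n * z ^ (n - 1) * Complex.I) y := by
    simpa [z, mul_comm] using
      (((hasDerivAt_id (y : ℂ)).mul_const Complex.I).const_add (x : ℂ)).fun_pow n
  refine ⟨_, _, Complex.reCLM.hasFDerivAt.comp_hasDerivAt x hz₁.comp_ofReal,
    Complex.reCLM.hasFDerivAt.comp_hasDerivAt y hz₂.comp_ofReal, ?_⟩
  cases n with
  | zero => simp
  | succ m =>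
    simp only [rePow, Complex.reCLM_apply, Nat.add_sub_cancel, pow_succ, Complex.mul_re,
      Complex.mul_im, Complex.natCast_re, Complex.natCast_im, Complex.I_re, Complex.I_im, z,
      Complex.add_re, Complex.add_im, Complex.ofReal_re, Complex.ofReal_im]
    push_cast
    ring

theorem hasEulerDegreeAt_sqrt_sq_add_sq {x y : ℝ} (h : x ^ 2 + y ^ 2 ≠ 0) :
    HasEulerDegreeAt (fun a b => √(a ^ 2 + b ^ 2)) 1 x y := by
  refine ⟨_, _, ((hasDerivAt_pow 2 x).add_const (y ^ 2)).sqrt h,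
    ((hasDerivAt_pow 2 y).const_add (x ^ 2)).sqrt h, ?_⟩
  have hs : √(x ^ 2 + y ^ 2) ≠ 0 := by positivity
  field_simp
  rw [Real.sq_sqrt (by positivity)]
  ring

theorem hasEulerDegreeAt_comp_rot (i : Fin 2) (x y : ℝ) :
    HasEulerDegreeAt (fun a b => comp (-b, a) i) 1 x y := by
  fin_cases i
  · exact ⟨0, -1, by simpa [comp] using hasDerivAt_const x (-y),
      by simpa [comp] using (hasDerivAt_id' y).fun_neg, by simp [comp]⟩
  · exact ⟨1, 0, by simpa [comp] using hasDerivAt_id' x,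
      by simpa [comp] using hasDerivAt_const y x, by simp [comp]⟩

/-- In Cartesian coordinates the conical tensor is `conicalProfile C n i x y * comp (x, y) j`,
with `C = -λ a₀ μ`. -/
noncomputable def conicalProfile (C : ℝ) (n : ℕ) (i : Fin 2) (x y : ℝ) : ℝ :=
  C * comp (-y, x) i * rePow n x y * (√(x ^ 2 + y ^ 2) ^ (n + 3))⁻¹

theorem hasEulerDegreeAt_conicalProfile (C : ℝ) (n : ℕ) (i : Fin 2) {x y : ℝ}
    (h : x ^ 2 + y ^ 2 ≠ 0) : HasEulerDegreeAt (conicalProfile C n i) (-2) x y := by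
  have hs : √(x ^ 2 + y ^ 2) ^ (n + 3) ≠ 0 := by positivity
  convert ((((hasEulerDegreeAt_comp_rot i x y).const_mul C).mul
    (hasEulerDegreeAt_rePow n x y)).mul
    (((hasEulerDegreeAt_sqrt_sq_add_sq h).pow (n + 3)).inv hs)) using 1
  · rfl
  · push_cast
    ring

theorem divergence_conicalProfile_mul_comp_eq_zero (C : ℝ) (n : ℕ) (i : Fin 2) {x y : ℝ}
    (h : x ^ 2 + y ^ 2 ≠ 0) :
    pd1 (fun a b => conicalProfile C n i a b * comp (a, b) 0) x y
      + pd2 (fun a b => conicalProfile C n i a b * comp (a, b) 1) x y = 0 := by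
  simpa using (hasEulerDegreeAt_conicalProfile C n i h).pd1_mul_fst_add_pd2_mul_snd

theorem cos_polarAngle {x y : ℝ} (h : x ^ 2 + y ^ 2 ≠ 0) :
    cos (polarAngle x y) = x / √(x ^ 2 + y ^ 2) := by
  have hz : (x : ℂ) + y * Complex.I ≠ 0 := fun hz => h (by
    have hx : x = 0 := by simpa using congrArg Complex.re hz
    have hy : y = 0 := by simpa using congrArg Complex.im hz
    simp [hx, hy])
  rw [polarAngle, Complex.cos_arg hz, Complex.norm_add_mul_I]
  simp

theorem sin_polarAngle (x y : ℝ) : sin (polarAngle x y) = y / √(x ^ 2 + y ^ 2) := by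
  rw [polarAngle, Complex.sin_arg, Complex.norm_add_mul_I]
  simp

theorem rePow_polar (n : ℕ) (r θ : ℝ) :
    rePow n (r * cos θ) (r * sin θ) = r ^ n * cos (n * θ) := by
  have hz : ((r * cos θ : ℝ) : ℂ) + (r * sin θ : ℝ) * Complex.I
      = r * (Complex.cos θ + Complex.sin θ * Complex.I) := by
    push_cast
    ring
  have hnθ : (n : ℂ) * θ = (n * θ : ℝ) := by push_cast; ring
  rw [rePow, hz, mul_pow, Complex.cos_add_sin_mul_I_pow, hnθ, ← Complex.ofReal_pow,
    Complex.re_ofReal_mul, Complex.add_re, Complex.mul_I_re, ← Complex.ofReal_cos,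
    ← Complex.ofReal_sin, Complex.ofReal_re, Complex.ofReal_im, neg_zero, add_zero]

theorem cos_nat_mul_polarAngle (n : ℕ) {x y : ℝ} (h : x ^ 2 + y ^ 2 ≠ 0) :
    cos (n * polarAngle x y) = rePow n x y / √(x ^ 2 + y ^ 2) ^ n := by
  have hs : √(x ^ 2 + y ^ 2) ≠ 0 := by positivity
  have hpolar := rePow_polar n (√(x ^ 2 + y ^ 2)) (polarAngle x y)
  rw [cos_polarAngle h, sin_polarAngle, mul_div_cancel₀ _ hs, mul_div_cancel₀ _ hs] at hpolar
  rw [hpolar]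
  field_simp

theorem one_div_sqrt_mul_cos_polarAngle_eq_conicalProfile (C : ℝ) (n : ℕ) (i j : Fin 2)
    (x y : ℝ) :
    1 / √(x ^ 2 + y ^ 2) * (C * cos (n * polarAngle x y) * comp (eTh (polarAngle x y)) i
      * comp (eR (polarAngle x y)) j) = conicalProfile C n i x y * comp (x, y) j := by
  by_cases h : x ^ 2 + y ^ 2 = 0
  · simp [conicalProfile, h]
  have hs : √(x ^ 2 + y ^ 2) ≠ 0 := by positivity
  have heTh : comp (eTh (polarAngle x y)) i = comp (-y, x) i / √(x ^ 2 + y ^ 2) := by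
    fin_cases i <;> simp [comp, eTh, cos_polarAngle h, sin_polarAngle, neg_div]
  have heR : comp (eR (polarAngle x y)) j = comp (x, y) j / √(x ^ 2 + y ^ 2) := by
    fin_cases j <;> simp [comp, eR, cos_polarAngle h, sin_polarAngle]
  rw [heTh, heR, cos_nat_mul_polarAngle n h, conicalProfile]
  field_simp
  ring

theorem sq_add_sq_polar (r θ : ℝ) : (r * cos θ) ^ 2 + (r * sin θ) ^ 2 = r ^ 2 := by
  linear_combination r ^ 2 * cos_sq_add_sin_sq θ

theorem sq_mul_conicalProfile_polar (C : ℝ) (n : ℕ) (i : Fin 2) {r : ℝ} (hr : 0 < r)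
    (θ : ℝ) :
    r ^ 2 * conicalProfile C n i (r * cos θ) (r * sin θ)
      = C * cos (n * θ) * comp (eTh θ) i := by
  have hrot : comp (-(r * sin θ), r * cos θ) i = r * comp (eTh θ) i := by
    fin_cases i <;> simp [comp, eTh]
  rw [conicalProfile, hrot, rePow_polar, sq_add_sq_polar, Real.sqrt_sq hr.le]
  field_simp
  ring

theorem integral_cos_int_mul (k : ℤ) (hk : k ≠ 0) :
    ∫ θ in (0 : ℝ)..2 * π, cos (k * θ) = 0 := by
  rw [intervalIntegral.integral_comp_mul_left (fun t => cos t) (Int.cast_ne_zero.mpr hk),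
    integral_cos, mul_zero, sin_zero, sub_zero,
    show (k : ℝ) * (2 * π) = (2 * k : ℤ) * π by push_cast; ring, sin_int_mul_pi, smul_zero]

theorem integral_sin_int_mul (k : ℤ) : ∫ θ in (0 : ℝ)..2 * π, sin (k * θ) = 0 := by
  rcases eq_or_ne k 0 with rfl | hk
  · simp
  rw [intervalIntegral.integral_comp_mul_left (fun t => sin t) (Int.cast_ne_zero.mpr hk),
    integral_sin, mul_zero, cos_zero, cos_int_mul_two_pi, sub_self, smul_zero]

theorem integral_cos_nat_mul_mul_sin (n : ℕ) :
    ∫ θ in (0 : ℝ)..2 * π, cos (n * θ) * sin θ = 0 := by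
  have hprod (θ : ℝ) : cos (n * θ) * sin θ
      = (sin ((n + 1 : ℤ) * θ) - sin ((n - 1 : ℤ) * θ)) / 2 := by
    push_cast
    rw [add_mul, sub_mul, one_mul, sin_add, sin_sub]
    ring
  simp only [hprod, intervalIntegral.integral_div]
  rw [intervalIntegral.integral_sub (by apply Continuous.intervalIntegrable; fun_prop)
    (by apply Continuous.intervalIntegrable; fun_prop), integral_sin_int_mul,
    integral_sin_int_mul, sub_self, zero_div]

theorem integral_cos_nat_mul_mul_cos {n : ℕ} (hn : n ≠ 1) :
    ∫ θ in (0 : ℝ)..2 * π, cos (n * θ) * cos θ = 0 := by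
  have hprod (θ : ℝ) : cos (n * θ) * cos θ
      = (cos ((n + 1 : ℤ) * θ) + cos ((n - 1 : ℤ) * θ)) / 2 := by
    push_cast
    rw [add_mul, sub_mul, one_mul, cos_add, cos_sub]
    ring
  simp only [hprod, intervalIntegral.integral_div]
  rw [intervalIntegral.integral_add (by apply Continuous.intervalIntegrable; fun_prop)
    (by apply Continuous.intervalIntegrable; fun_prop), integral_cos_int_mul _ (by omega),
    integral_cos_int_mul _ (by omega), add_zero, zero_div]

theorem integral_cos_nat_mul_mul_comp_eTh {n : ℕ} (hn : n ≠ 1) (i : Fin 2) :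
    ∫ θ in (0 : ℝ)..2 * π, cos (n * θ) * comp (eTh θ) i = 0 := by
  fin_cases i
  · simpa [comp, eTh] using integral_cos_nat_mul_mul_sin n
  · simpa [comp, eTh] using integral_cos_nat_mul_mul_cos hn

theorem deriv_const_mul_sin_mul (a c : ℝ) :
    deriv (fun θ => a * sin (c * θ)) = fun θ => a * c * cos (c * θ) := by
  ext θ
  rw [(((hasDerivAt_id' θ).const_mul c).sin.const_mul a).deriv]
  ring

theorem deriv_const_mul_cos_mul (a c : ℝ) :
    deriv (fun θ => a * cos (c * θ)) = fun θ => -(a * c) * sin (c * θ) := by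
  ext θ
  rw [(((hasDerivAt_id' θ).const_mul c).cos.const_mul a).deriv]
  ring

/-- For the conical solution w = r g(θ), g = a₀ sin(μθ) (μ a nonnegative integer) and
stress function φ = Dλ ln r with λ = μ²−1, the tensor field
a = (1/r)[(g + g'' + λg) e_θ⊗e_θ − λ g' e_θ⊗e_r] has divergence
div a = (1/r²)[(g''' + (λ+1)g') e_θ − (g'' + (λ+1)g) e_r], and the loop integral
∫_{∂B_ε} (a ν − (x − x₀)⟨div a, ν⟩) dl vanishes for every center x₀ and radius ε > 0. -/
theorem conical_no_point_force (a₀ : ℝ) (μ : ℤ) (hμ : 0 ≤ μ) (g : ℝ → ℝ)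
    (hg : g = fun θ => a₀ * Real.sin ((μ : ℝ) * θ)) (lam : ℝ) (hlam : lam = (μ : ℝ) ^ 2 - 1)
    (A : Fin 2 → Fin 2 → ℝ → ℝ → ℝ)
    (hA : ∀ i j x y, A i j x y =
      (1 / Real.sqrt (x ^ 2 + y ^ 2)) *
        ((g (polarAngle x y) + deriv (deriv g) (polarAngle x y) + lam * g (polarAngle x y))
            * comp (eTh (polarAngle x y)) i * comp (eTh (polarAngle x y)) j
          - lam * deriv g (polarAngle x y)
            * comp (eTh (polarAngle x y)) i * comp (eR (polarAngle x y)) j)) :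
    (∀ r > (0:ℝ), ∀ θ : ℝ, ∀ i : Fin 2,
      pd1 (A i 0) (r * Real.cos θ) (r * Real.sin θ)
          + pd2 (A i 1) (r * Real.cos θ) (r * Real.sin θ)
        = (1 / r ^ 2) *
            ((deriv (deriv (deriv g)) θ + (lam + 1) * deriv g θ) * comp (eTh θ) i
              - (deriv (deriv g) θ + (lam + 1) * g θ) * comp (eR θ) i)) ∧
    (∀ x₀ : ℝ × ℝ, ∀ ε > (0:ℝ), ∀ i : Fin 2,
      (∫ θ in (0:ℝ)..(2 * π), ε *
        ((∑ j : Fin 2, A i j (ε * Real.cos θ) (ε * Real.sin θ) * comp (eR θ) j)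
          - comp ((ε * Real.cos θ, ε * Real.sin θ) - x₀) i *
            (∑ j : Fin 2,
              (pd1 (A j 0) (ε * Real.cos θ) (ε * Real.sin θ)
                + pd2 (A j 1) (ε * Real.cos θ) (ε * Real.sin θ)) * comp (eR θ) j))) = 0) := by
  obtain ⟨n, rfl⟩ := Int.eq_ofNat_of_zero_le hμ
  rw [Int.cast_natCast] at hg hlam
  subst hg hlam
  have hg₁ := deriv_const_mul_sin_mul a₀ n
  have hg₂ : deriv (deriv fun θ => a₀ * sin (n * θ))
      = fun θ => -(a₀ * n * n) * sin (n * θ) := by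
    rw [hg₁, deriv_const_mul_cos_mul]
  have hg₃ : deriv (deriv (deriv fun θ => a₀ * sin (n * θ)))
      = fun θ => -(a₀ * n * n) * n * cos (n * θ) := by
    rw [hg₂, deriv_const_mul_sin_mul]
  set C : ℝ := -((n ^ 2 - 1) * (a₀ * n))
  have hA_eq (i j : Fin 2) : A i j = fun x y => conicalProfile C n i x y * comp (x, y) j := by
    ext x y
    rw [hA, hg₂, hg₁, ← one_div_sqrt_mul_cos_polarAngle_eq_conicalProfile]
    ring
  have hdiv : ∀ r > (0 : ℝ), ∀ θ : ℝ, ∀ i : Fin 2,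
      pd1 (A i 0) (r * cos θ) (r * sin θ) + pd2 (A i 1) (r * cos θ) (r * sin θ) = 0 := by
    intro r hr θ i
    rw [hA_eq, hA_eq]
    exact divergence_conicalProfile_mul_comp_eq_zero C n i (by rw [sq_add_sq_polar]; positivity)
  refine ⟨fun r hr θ i => ?_, fun x₀ ε hε i => ?_⟩
  · rw [hdiv r hr θ i, hg₃, hg₂, hg₁]
    ring
  · have hloop (θ : ℝ) :
        ε * ((∑ j : Fin 2, A i j (ε * cos θ) (ε * sin θ) * comp (eR θ) j)
          - comp ((ε * cos θ, ε * sin θ) - x₀) i * (∑ j : Fin 2,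
            (pd1 (A j 0) (ε * cos θ) (ε * sin θ) + pd2 (A j 1) (ε * cos θ) (ε * sin θ))
              * comp (eR θ) j)) = C * (cos (n * θ) * comp (eTh θ) i) := by
      rw [Fin.sum_univ_two, Fin.sum_univ_two, hdiv ε hε θ, hdiv ε hε θ, hA_eq, hA_eq]
      simp only [comp_zero, comp_one, eR, zero_mul, add_zero, mul_zero, sub_zero]
      linear_combination sq_mul_conicalProfile_polar C n i hε θ
        + ε ^ 2 * conicalProfile C n i (ε * cos θ) (ε * sin θ) * cos_sq_add_sin_sq θ
    rw [intervalIntegral.integral_congr fun θ _ => hloop θ, intervalIntegral.integral_const_mul]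
    rcases eq_or_ne n 1 with rfl | hn
    · simp [C]
    · rw [integral_cos_nat_mul_mul_comp_eTh hn, mul_zero]
end

section
/- Fold-normal closure and Gaussian charge for concurrent straight folds: let n ≥ 1, and for i = 0,…,n−1 let γ_i ∈ ℝ, t_i ∈ ℝ² unit vectors (tangents of straight folds through the origin) with normals ν_i = e₃ × t_i (90° rotation). Suppose Σ_i γ_i ν_i = 0. Define the piecewise-constant gradient field G on the angular sectors Ω_i (between fold i and fold i+1) by G|_{Ω_i} = −Σ_{j=0}^{i} γ_j ν_j. Then G is curl-free in each sector (being constant), its tangential component is continuous across each fold S_j (the jump across S_j is −γ_j ν_j, which is normal to S_j), and the total 'Gaussian charge' −(1/2)Σ_{j=1}^{n-1} Σ_{i=0}^{j-1} γ_i γ_j ⟨ν_i, t_j⟩ is independent of which fold is labeled 0, i.e. invariant under cyclic relabeling, given the closure condition Σ_i γ_i ν_i = 0. -/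
/-!
Put `f i j = γᵢ γⱼ ⟨νᵢ, tⱼ⟩`; since `⟨νᵢ, tⱼ⟩ = tᵢ × tⱼ`, `f` is antisymmetric. Relabelling
the folds cyclically changes `Σ_{i<j} f i j` only in the pairs containing fold `0`, which turn
from `(0, j)` into `(i, 0)`; the change `Σᵢ f i 0 - Σⱼ f 0 j = 2 γ₀ ⟨Σᵢ γᵢ νᵢ, t₀⟩` vanishes by
the closure condition.
-/

noncomputable def gaussCharge (n : ℕ) (γ : Fin n → ℝ) (ν t : Fin n → ℝ × ℝ) : ℝ :=
  -(1 / 2) * ∑ j : Fin n, ∑ i ∈ Finset.univ.filter (fun i => i < j),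
    γ i * γ j * ((ν i).1 * (t j).1 + (ν i).2 * (t j).2)

open Finset

theorem sum_filter_le_of_val_eq_add_one {M : Type*} [AddCommMonoid M] {n : ℕ} (v : Fin n → M)
    {i j : Fin n} (hij : (j : ℕ) = i + 1) :
    ∑ k ∈ univ.filter (· ≤ j), v k = v j + ∑ k ∈ univ.filter (· ≤ i), v k := by
  have hins : univ.filter (· ≤ j) = insert j (univ.filter (· ≤ i)) := by
    ext k
    simp only [mem_filter, mem_univ, true_and, mem_insert, Fin.le_def, Fin.ext_iff, hij]
    omega
  rw [hins, sum_insert]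
  simp only [mem_filter, mem_univ, true_and, Fin.le_def, hij]
  omega

theorem sum_filter_lt_comp_add_one {M : Type*} [AddCommGroup M] (m : ℕ)
    (f : Fin (m + 1) → Fin (m + 1) → M) :
    ∑ j, ∑ i ∈ univ.filter (· < j), f (i + 1) (j + 1) + ∑ j, f 0 j
      = ∑ j, ∑ i ∈ univ.filter (· < j), f i j + ∑ i, f i 0 := by
  set A := ∑ j : Fin m, ∑ i : Fin m, if i < j then f i.succ j.succ else 0
  have hL : ∑ j, ∑ i ∈ univ.filter (· < j), f (i + 1) (j + 1) = A + ∑ i : Fin m, f i.succ 0 := by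
    simp [sum_filter, A, Fin.sum_univ_castSucc (n := m), Fin.coeSucc_eq_succ,
      Fin.castSucc_lt_last, not_lt.2 (Fin.le_last _)]
  have hR : ∑ j, ∑ i ∈ univ.filter (· < j), f i j = A + ∑ j : Fin m, f 0 j.succ := by
    simp [sum_filter, A, Fin.sum_univ_succ (n := m), Fin.succ_pos, not_lt.2 (Fin.zero_le _),
      sum_add_distrib, add_comm]
  rw [hL, hR, Fin.sum_univ_succ, Fin.sum_univ_succ]
  abel

theorem sum_filter_lt_comp_add_one_of_antisymm {M : Type*} [AddCommGroup M] (m : ℕ)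
    (f : Fin (m + 1) → Fin (m + 1) → M) (hanti : ∀ i j, f j i = -f i j)
    (hcol : ∑ i, f i 0 = 0) :
    ∑ j, ∑ i ∈ univ.filter (· < j), f (i + 1) (j + 1)
      = ∑ j, ∑ i ∈ univ.filter (· < j), f i j := by
  have hrow : ∑ j, f 0 j = 0 := calc
    ∑ j, f 0 j = ∑ j, -f j 0 := sum_congr rfl fun j _ => hanti j 0
    _ = 0 := by rw [sum_neg_distrib, hcol, neg_zero]
  simpa [hrow, hcol] using sum_filter_lt_comp_add_one m f

theorem concurrent_folds_general (n : ℕ) (γ : Fin n → ℝ) (t : Fin n → ℝ × ℝ)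
    (ν : Fin n → ℝ × ℝ)
    (hν : ∀ i, ν i = (-(t i).2, (t i).1))
    (hclose : ∑ i : Fin n, γ i • ν i = (0 : ℝ × ℝ)) (G : Fin n → ℝ × ℝ)
    (hG : ∀ i, G i = -∑ j ∈ Finset.univ.filter (fun j => j ≤ i), γ j • ν j) :
    (∀ i j : Fin n, (j : ℕ) = (i : ℕ) + 1 → G j - G i = -(γ j • ν j)) ∧
    (∀ j : Fin n, (-(γ j) * (ν j).1) * (t j).1 + (-(γ j) * (ν j).2) * (t j).2 = 0) ∧
    (∀ σ : Fin n → Fin n, (∀ k : Fin n, (σ k : ℕ) = ((k : ℕ) + 1) % n) →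
      gaussCharge n (γ ∘ σ) (ν ∘ σ) (t ∘ σ) = gaussCharge n γ ν t) := by
  refine ⟨fun i j hij => ?_, fun j => by rw [hν]; ring, fun σ hσ => ?_⟩
  · rw [hG, hG, sum_filter_le_of_val_eq_add_one _ hij]
    abel
  cases n with
  | zero => simp [gaussCharge]
  | succ m =>
    obtain rfl : σ = (· + 1) :=
      funext fun k => Fin.ext <| by rw [hσ, Fin.val_add, Fin.val_one']; simp
    have hcol : ∑ i, γ i * γ 0 * ((ν i).1 * (t 0).1 + (ν i).2 * (t 0).2) = 0 := by
      have h1 := congrArg Prod.fst hclose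
      have h2 := congrArg Prod.snd hclose
      simp only [Prod.fst_sum, Prod.snd_sum, Prod.smul_fst, Prod.smul_snd, smul_eq_mul,
        Prod.fst_zero, Prod.snd_zero] at h1 h2
      calc ∑ i, γ i * γ 0 * ((ν i).1 * (t 0).1 + (ν i).2 * (t 0).2)
          = γ 0 * ((t 0).1 * ∑ i, γ i * (ν i).1 + (t 0).2 * ∑ i, γ i * (ν i).2) := by
            simp only [mul_sum, ← sum_add_distrib]
            exact sum_congr rfl fun i _ => by ring
        _ = 0 := by rw [h1, h2]; ring
    unfold gaussCharge
    congr 1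
    exact sum_filter_lt_comp_add_one_of_antisymm m
      (fun i j => γ i * γ j * ((ν i).1 * (t j).1 + (ν i).2 * (t j).2))
      (fun i j => by simp only [hν]; ring) hcol

/-- Concurrent straight folds: given unit tangents t_i with normals ν_i = e₃ × t_i and
closure Σ γᵢνᵢ = 0, the sector gradients G_i = −Σ_{j≤i} γⱼνⱼ jump by −γⱼνⱼ across fold j,
the jump is orthogonal to the fold tangent (tangential continuity), and the Gaussian
charge is invariant under cyclic relabeling of the folds. -/
theorem concurrent_folds (n : ℕ) (hn : 1 ≤ n) (γ : Fin n → ℝ) (t : Fin n → ℝ × ℝ)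
    (ht : ∀ i, (t i).1 ^ 2 + (t i).2 ^ 2 = 1) (ν : Fin n → ℝ × ℝ)
    (hν : ∀ i, ν i = (-(t i).2, (t i).1))
    (hclose : ∑ i : Fin n, γ i • ν i = (0 : ℝ × ℝ)) (G : Fin n → ℝ × ℝ)
    (hG : ∀ i, G i = -∑ j ∈ Finset.univ.filter (fun j => j ≤ i), γ j • ν j) :
    (∀ i j : Fin n, (j : ℕ) = (i : ℕ) + 1 → G j - G i = -(γ j • ν j)) ∧
    (∀ j : Fin n, (-(γ j) * (ν j).1) * (t j).1 + (-(γ j) * (ν j).2) * (t j).2 = 0) ∧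
    (∀ σ : Fin n → Fin n, (∀ k : Fin n, (σ k : ℕ) = ((k : ℕ) + 1) % n) →
      gaussCharge n (γ ∘ σ) (ν ∘ σ) (t ∘ σ) = gaussCharge n γ ν t) :=
  concurrent_folds_general n γ t ν hν hclose G hG
end
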